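/- arXiv:0710.1520 — 2 statements merged into one kernel-verified Lean document; each statement's English description precedes it below -/
import Mathlib

section
/- In the three-color urn model with replacement matrix R = [[sQ, (columns giving row sums 1)],[0,0,1]] as in (2), where Q is a 2×2 irreducible aperiodic stochastic matrix with non-principal eigenvalue λ > 1/2 and eigenvector ξ, and 0 < s < 1, the process T_n = S_nξ / Π_n(sλ) is an L²-bounded martingale, where S_n = (W_n, B_n). -/
/-!
Write `M n = S n ⬝ᵥ ξ`. Since `ξ` is an eigenvector of `Q`, drawing a colour changes `M` by
`sλ (χ ⬝ᵥ ξ)`, and the draw probabilities `S n / (n + 1)` give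
`E[M (n + 1) | ℱ n] = (1 + sλ / (n + 1)) M n`; dividing by `Π_n(sλ)` yields the martingale.

For the L² bound, the same computation with `ξ = 1` (rows of `Q` sum to one) shows that the
expected number of non-green balls is at most `Π_n(s)`, so
`E[(χ ⬝ᵥ ξ)²] ≤ |ξ|² Π_n(s) / (n + 1)` and
`E[M (n + 1)²] ≤ (1 + 2sλ / (n + 1)) E[M n²] + (sλ)² |ξ|² Π_n(s) / (n + 1)`.
After division by `Π_{n+1}(sλ)²` the increments are `Π_k(s) / ((k + 1) Π_k(sλ)²)`, and these
telescope against `Π_k(s) / Π_k(sλ)²` with constant `(1 + sλ)² / (2sλ - s)`: this is where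
`λ > 1/2` enters.
-/

open MeasureTheory Filter Matrix

/-- `Π_n(c)` in the paper. -/
noncomputable def growthFactor (c : ℝ) (n : ℕ) : ℝ := ∏ j ∈ Finset.range n, (1 + c / (j + 1))

namespace growthFactor

variable {a b c : ℝ}

@[simp]
lemma zero (c : ℝ) : growthFactor c 0 = 1 := Finset.prod_range_zero _

lemma succ (c : ℝ) (n : ℕ) : growthFactor c (n + 1) = growthFactor c n * (1 + c / (n + 1)) :=
  Finset.prod_range_succ _ _

lemma pos (hc : 0 ≤ c) (n : ℕ) : 0 < growthFactor c n :=
  Finset.prod_pos fun _ _ => by positivity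

lemma le_div_sq_sub_div_sq_succ (ha : 0 ≤ a) (hab : a ≤ 2 * b) (k : ℕ) :
    (2 * b - a) / (1 + b) ^ 2 * (growthFactor a k / growthFactor b k ^ 2 / (k + 1)) ≤
      growthFactor a k / growthFactor b k ^ 2 -
        growthFactor a (k + 1) / growthFactor b (k + 1) ^ 2 := by
  have hb : 0 ≤ b := by linarith
  have hk : (1 : ℝ) ≤ k + 1 := by linarith [k.cast_nonneg (α := ℝ)]
  have hr : 0 ≤ growthFactor a k / growthFactor b k ^ 2 := div_nonneg (pos ha k).le (sq_nonneg _)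
  have hx : 0 ≤ b / (k + 1) := by positivity
  have hxb : b / (k + 1) ≤ b := div_le_self hb hk
  have hdrop : growthFactor a k / growthFactor b k ^ 2 -
      growthFactor a (k + 1) / growthFactor b (k + 1) ^ 2 =
        growthFactor a k / growthFactor b k ^ 2 *
          (((2 * b - a) / (k + 1) + (b / (k + 1)) ^ 2) / (1 + b / (k + 1)) ^ 2) := by
    rw [succ, succ]
    field_simp
    ring
  have hscalar : (2 * b - a) / (1 + b) ^ 2 / (k + 1) ≤
      ((2 * b - a) / (k + 1) + (b / (k + 1)) ^ 2) / (1 + b / (k + 1)) ^ 2 :=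
    calc (2 * b - a) / (1 + b) ^ 2 / (k + 1) = (2 * b - a) / (k + 1) / (1 + b) ^ 2 :=
          div_right_comm ..
      _ ≤ (2 * b - a) / (k + 1) / (1 + b / (k + 1)) ^ 2 := by gcongr
      _ ≤ _ := by gcongr; exact le_add_of_nonneg_right (sq_nonneg _)
  rw [hdrop, mul_div_assoc', mul_comm, mul_div_assoc]
  exact mul_le_mul_of_nonneg_left hscalar hr

lemma sum_div_sq_le (ha : 0 ≤ a) (hab : a < 2 * b) (n : ℕ) :
    ∑ k ∈ Finset.range n, growthFactor a k / growthFactor b k ^ 2 / (k + 1) ≤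
      (1 + b) ^ 2 / (2 * b - a) := by
  have hb : 0 < b := by linarith
  have hcoef : 0 < (2 * b - a) / (1 + b) ^ 2 := div_pos (by linarith) (by positivity)
  rw [← one_div_div, le_div_iff₀' hcoef, Finset.mul_sum]
  calc ∑ k ∈ Finset.range n,
        (2 * b - a) / (1 + b) ^ 2 * (growthFactor a k / growthFactor b k ^ 2 / (k + 1))
      ≤ ∑ k ∈ Finset.range n, (growthFactor a k / growthFactor b k ^ 2 -
        growthFactor a (k + 1) / growthFactor b (k + 1) ^ 2) :=
        Finset.sum_le_sum fun k _ => le_div_sq_sub_div_sq_succ ha hab.le k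
    _ = 1 - growthFactor a n / growthFactor b n ^ 2 := by rw [Finset.sum_range_sub']; simp
    _ ≤ 1 := sub_le_self _ (div_nonneg (pos ha n).le (sq_nonneg _))

lemma div_sq_le_of_le_succ {v : ℕ → ℝ} {C : ℝ} (ha : 0 ≤ a) (hab : a < 2 * b) (hC : 0 ≤ C)
    (hv : ∀ n, 0 ≤ v n)
    (hstep : ∀ n : ℕ, v (n + 1) ≤ (1 + 2 * b / (n + 1)) * v n + C * (growthFactor a n / (n + 1)))
    (n : ℕ) : v n / growthFactor b n ^ 2 ≤ v 0 + C * ((1 + b) ^ 2 / (2 * b - a)) := by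
  have hb : 0 ≤ b := by linarith
  have hincr : ∀ k : ℕ, v (k + 1) / growthFactor b (k + 1) ^ 2 - v k / growthFactor b k ^ 2 ≤
      C * (growthFactor a k / growthFactor b k ^ 2 / (k + 1)) := by
    intro k
    have hG := pos hb k
    have hx : 0 ≤ b / (k + 1) := by positivity
    have hrest : 0 ≤ C * (growthFactor a k / (k + 1)) :=
      mul_nonneg hC (div_nonneg (pos ha k).le (by positivity))
    have hsq : 1 + 2 * b / (k + 1) ≤ (1 + b / (k + 1)) ^ 2 := by
      rw [mul_div_assoc]; nlinarith [sq_nonneg (b / (k + 1))]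
    have hexpand : (C * (growthFactor a k / growthFactor b k ^ 2 / (k + 1)) +
        v k / growthFactor b k ^ 2) * (growthFactor b k * (1 + b / (k + 1))) ^ 2 =
          (v k + C * (growthFactor a k / (k + 1))) * (1 + b / (k + 1)) ^ 2 := by
      field_simp
      ring
    rw [succ, sub_le_iff_le_add, div_le_iff₀ (by positivity), hexpand]
    have hone : (1 : ℝ) ≤ (1 + b / (k + 1)) ^ 2 := one_le_pow₀ (le_add_of_nonneg_right hx)
    nlinarith [hstep k, mul_le_mul_of_nonneg_left hsq (hv k), le_mul_of_one_le_right hrest hone]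
  calc v n / growthFactor b n ^ 2
      = v 0 + ∑ k ∈ Finset.range n,
          (v (k + 1) / growthFactor b (k + 1) ^ 2 - v k / growthFactor b k ^ 2) := by
        simp [Finset.sum_range_sub (fun k => v k / growthFactor b k ^ 2) n]
    _ ≤ v 0 + C * ∑ k ∈ Finset.range n, growthFactor a k / growthFactor b k ^ 2 / (k + 1) := by
        rw [Finset.mul_sum]; gcongr with k; exact hincr k
    _ ≤ v 0 + C * ((1 + b) ^ 2 / (2 * b - a)) := by gcongr; exact sum_div_sq_le ha hab n

end growthFactor

section Probability

variable {Ω : Type*} {m0 : MeasurableSpace Ω} {μ : Measure Ω} [IsFiniteMeasure μ]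

lemma martingale_div_prod_of_condExp_succ {ℱ : Filtration ℕ m0} {X : ℕ → Ω → ℝ} {g : ℕ → ℝ}
    (hX : StronglyAdapted ℱ X) (hint : ∀ n, Integrable (X n) μ) (hg : ∀ n, g n ≠ 0)
    (hcond : ∀ n, μ[X (n + 1) | ℱ n] =ᵐ[μ] fun ω => g n * X n ω) :
    Martingale (fun n ω => X n ω / ∏ j ∈ Finset.range n, g j) ℱ μ := by
  refine martingale_nat (fun n => by simpa only [div_eq_mul_inv] using (hX n).mul_const _)
    (fun n => (hint n).div_const _) fun n => ?_
  have hdiv : (fun ω => X (n + 1) ω / ∏ j ∈ Finset.range (n + 1), g j) =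
      (∏ j ∈ Finset.range (n + 1), g j)⁻¹ • X (n + 1) := by
    ext ω; simp [div_eq_inv_mul]
  filter_upwards [condExp_smul (μ := μ) (∏ j ∈ Finset.range (n + 1), g j)⁻¹ (X (n + 1)) (ℱ n),
    hcond n] with ω hsmul hstep
  rw [hdiv, hsmul, Pi.smul_apply, hstep, Finset.prod_range_succ, smul_eq_mul,
    mul_inv, mul_assoc, inv_mul_cancel_left₀ (hg n), div_eq_inv_mul]

lemma integral_eq_prod_mul_of_condExp_succ {ℱ : Filtration ℕ m0} {X : ℕ → Ω → ℝ} {g : ℕ → ℝ}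
    (hcond : ∀ n, μ[X (n + 1) | ℱ n] =ᵐ[μ] fun ω => g n * X n ω) (n : ℕ) :
    ∫ ω, X n ω ∂μ = (∏ j ∈ Finset.range n, g j) * ∫ ω, X 0 ω ∂μ := by
  induction n with
  | zero => simp
  | succ n ih =>
    rw [← integral_condExp (ℱ.le n), integral_congr_ae (hcond n), integral_const_mul, ih,
      Finset.prod_range_succ]
    ring

lemma integral_mul_eq_of_condExp_eq {m : MeasurableSpace Ω} (hm : m ≤ m0) {X Y : Ω → ℝ} {c : ℝ}
    (hXm : StronglyMeasurable[m] X) (hXY : Integrable (X * Y) μ) (hY : Integrable Y μ)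
    (hcond : μ[Y | m] =ᵐ[μ] fun ω => c * X ω) :
    ∫ ω, X ω * Y ω ∂μ = c * ∫ ω, X ω ^ 2 ∂μ := by
  rw [← integral_const_mul]
  calc ∫ ω, X ω * Y ω ∂μ = ∫ ω, μ[X * Y | m] ω ∂μ := (integral_condExp hm).symm
    _ = ∫ ω, c * X ω ^ 2 ∂μ := by
      refine integral_congr_ae ?_
      filter_upwards [condExp_mul_of_stronglyMeasurable_left hXm hXY hY, hcond] with ω hpull hY
      rw [hpull, Pi.mul_apply, hY]
      ring

lemma integral_add_mul_sq_of_condExp_eq {m : MeasurableSpace Ω} (hm : m ≤ m0) {X Y : Ω → ℝ}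
    {c : ℝ} (hXm : StronglyMeasurable[m] X) (hX : MemLp X 2 μ) (hY : MemLp Y 2 μ)
    (hcond : μ[Y | m] =ᵐ[μ] fun ω => c * X ω) (a : ℝ) :
    ∫ ω, (X ω + a * Y ω) ^ 2 ∂μ =
      (1 + 2 * a * c) * ∫ ω, X ω ^ 2 ∂μ + a ^ 2 * ∫ ω, Y ω ^ 2 ∂μ := by
  have hXY : Integrable (X * Y) μ := hX.integrable_mul hY
  have hcross := integral_mul_eq_of_condExp_eq hm hXm hXY (hY.integrable one_le_two) hcond
  have hexpand : (fun ω => (X ω + a * Y ω) ^ 2) =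
      fun ω => X ω ^ 2 + 2 * a * (X ω * Y ω) + a ^ 2 * Y ω ^ 2 := by
    ext ω; ring
  have hX2 : Integrable (fun ω => X ω ^ 2) μ := hX.integrable_sq
  have hXY' : Integrable (fun ω => 2 * a * (X ω * Y ω)) μ := hXY.const_mul _
  rw [hexpand, integral_add (f := fun ω => X ω ^ 2 + 2 * a * (X ω * Y ω)) (hX2.add hXY')
    (hY.integrable_sq.const_mul _), integral_add hX2 hXY', integral_const_mul, integral_const_mul,
    hcross]
  ring

end Probability

section Urn

variable {Ω ι : Type*} [Fintype ι] {m0 : MeasurableSpace Ω} {μ : Measure Ω}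

lemma dotProduct_vecMul_of_mulVec_eq_smul {Q : Matrix ι ι ℝ} {ξ : ι → ℝ} {l : ℝ}
    (hξ : Q *ᵥ ξ = l • ξ) (v : ι → ℝ) : v ᵥ* Q ⬝ᵥ ξ = l * (v ⬝ᵥ ξ) := by
  rw [← Matrix.dotProduct_mulVec, hξ, dotProduct_smul, smul_eq_mul]

lemma sq_dotProduct_le_of_eq_zero_or_single [DecidableEq ι] {v : ι → ℝ}
    (hv : v = 0 ∨ ∃ i, v = Pi.single i 1) (ξ : ι → ℝ) : (v ⬝ᵥ ξ) ^ 2 ≤ (ξ ⬝ᵥ ξ) * (v ⬝ᵥ 1) := by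
  rcases hv with rfl | ⟨i, rfl⟩
  · simp
  · rw [single_one_dotProduct, single_one_dotProduct, Pi.one_apply, mul_one, sq]
    exact Finset.single_le_sum (f := fun j => ξ j * ξ j) (fun j _ => mul_self_nonneg (ξ j))
      (Finset.mem_univ i)

lemma memLp_dotProduct {V : Ω → ι → ℝ} {p : ENNReal} (hV : ∀ i, MemLp (fun ω => V ω i) p μ)
    (w : ι → ℝ) : MemLp (fun ω => V ω ⬝ᵥ w) p μ :=
  memLp_finsetSum _ fun i _ => (hV i).mul_const (w i)

lemma condExp_dotProduct_of_condExp_apply {m : MeasurableSpace Ω} {V U : Ω → ι → ℝ} {c : ℝ}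
    (hV : ∀ i, Integrable (fun ω => V ω i) μ)
    (hcond : ∀ i, μ[fun ω => V ω i | m] =ᵐ[μ] fun ω => U ω i / c) (w : ι → ℝ) :
    μ[fun ω => V ω ⬝ᵥ w | m] =ᵐ[μ] fun ω => U ω ⬝ᵥ w / c := by
  have hsum : (fun ω => V ω ⬝ᵥ w) = ∑ i, w i • fun ω => V ω i := by
    ext ω; simp [dotProduct, mul_comm]
  rw [hsum]
  filter_upwards [condExp_finsetSum (fun i _ => (hV i).smul (w i)) m,
    ae_all_iff.2 fun i => condExp_smul (μ := μ) (w i) (fun ω => V ω i) m, ae_all_iff.2 hcond]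
    with ω hlin hsmul hU
  rw [hlin]
  simp only [Finset.sum_apply, hsmul, Pi.smul_apply, hU, smul_eq_mul, dotProduct,
    Finset.sum_div]
  exact Finset.sum_congr rfl fun i _ => by ring

/-- The colours `ι` together with one more colour (green) that only reproduces itself: `S n ω i`
counts colour `i` after `n` draws, out of `n + 1` balls in all, and `χ (n + 1) ω` is the indicator
vector of the colour drawn at trial `n + 1`, zero when green is drawn. -/
structure IsUrnProcess [DecidableEq ι] (μ : Measure Ω) (ℱ : Filtration ℕ m0) (Q : Matrix ι ι ℝ)
    (s : ℝ) (S χ : ℕ → Ω → ι → ℝ) : Prop where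
  nonneg : ∀ n ω i, 0 ≤ S n ω i
  sum_le : ∀ n ω, ∑ i, S n ω i ≤ n + 1
  draw : ∀ n ω, χ (n + 1) ω = 0 ∨ ∃ i, χ (n + 1) ω = Pi.single i 1
  measurable : ∀ n i, Measurable[ℱ n] fun ω => S n ω i
  measurable_draw : ∀ n i, Measurable[ℱ (n + 1)] fun ω => χ (n + 1) ω i
  succ : ∀ n ω, S (n + 1) ω = S n ω + s • Matrix.vecMul (χ (n + 1) ω) Q
  condExp_draw : ∀ n i, μ[fun ω => χ (n + 1) ω i | ℱ n] =ᵐ[μ] fun ω => S n ω i / (n + 1)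

namespace IsUrnProcess

variable [DecidableEq ι] {ℱ : Filtration ℕ m0} {Q : Matrix ι ι ℝ} {s l : ℝ} {ξ : ι → ℝ}
  {S χ : ℕ → Ω → ι → ℝ}

lemma memLp [IsFiniteMeasure μ] (h : IsUrnProcess μ ℱ Q s S χ) (p : ENNReal) (n : ℕ) (i : ι) :
    MemLp (fun ω => S n ω i) p μ :=
  .of_bound ((h.measurable n i).mono (ℱ.le n) le_rfl).aestronglyMeasurable (n + 1) <|
    ae_of_all _ fun ω => by
      rw [Real.norm_of_nonneg (h.nonneg n ω i)]
      exact (Finset.single_le_sum (fun j _ => h.nonneg n ω j) (Finset.mem_univ i)).trans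
        (h.sum_le n ω)

lemma memLp_draw [IsFiniteMeasure μ] (h : IsUrnProcess μ ℱ Q s S χ) (p : ENNReal) (n : ℕ)
    (i : ι) : MemLp (fun ω => χ (n + 1) ω i) p μ :=
  .of_bound ((h.measurable_draw n i).mono (ℱ.le _) le_rfl).aestronglyMeasurable 1 <|
    ae_of_all _ fun ω => by
      rcases h.draw n ω with h0 | ⟨j, hj⟩
      · simp [h0]
      · rw [hj]; by_cases hij : i = j <;> simp [hij]

lemma measurable_dotProduct (h : IsUrnProcess μ ℱ Q s S χ) (n : ℕ) (ξ : ι → ℝ) :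
    Measurable[ℱ n] fun ω => S n ω ⬝ᵥ ξ :=
  Finset.measurable_sum _ fun i _ => (h.measurable n i).mul_const (ξ i)

lemma dotProduct_succ (h : IsUrnProcess μ ℱ Q s S χ) (hξ : Q *ᵥ ξ = l • ξ) (n : ℕ) (ω : Ω) :
    S (n + 1) ω ⬝ᵥ ξ = S n ω ⬝ᵥ ξ + s * l * (χ (n + 1) ω ⬝ᵥ ξ) := by
  rw [h.succ, add_dotProduct, smul_dotProduct, dotProduct_vecMul_of_mulVec_eq_smul hξ,
    smul_eq_mul, mul_assoc]

lemma condExp_dotProduct_draw [IsFiniteMeasure μ] (h : IsUrnProcess μ ℱ Q s S χ) (n : ℕ)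
    (ξ : ι → ℝ) :
    μ[fun ω => χ (n + 1) ω ⬝ᵥ ξ | ℱ n] =ᵐ[μ] fun ω => S n ω ⬝ᵥ ξ / (n + 1) :=
  condExp_dotProduct_of_condExp_apply (fun i => (h.memLp_draw 1 n i).integrable le_rfl)
    (h.condExp_draw n) ξ

lemma condExp_dotProduct_succ [IsFiniteMeasure μ] (h : IsUrnProcess μ ℱ Q s S χ)
    (hξ : Q *ᵥ ξ = l • ξ) (n : ℕ) :
    μ[fun ω => S (n + 1) ω ⬝ᵥ ξ | ℱ n] =ᵐ[μ] fun ω => (1 + s * l / (n + 1)) * (S n ω ⬝ᵥ ξ) := by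
  have hsplit : (fun ω => S (n + 1) ω ⬝ᵥ ξ) =
      (fun ω => S n ω ⬝ᵥ ξ) + (s * l) • fun ω => χ (n + 1) ω ⬝ᵥ ξ := by
    ext ω; simp [h.dotProduct_succ hξ]
  have hM := (memLp_dotProduct (h.memLp 1 n) ξ).integrable le_rfl
  have hY := (memLp_dotProduct (h.memLp_draw 1 n) ξ).integrable le_rfl
  rw [hsplit]
  filter_upwards [condExp_add hM (hY.smul (s * l)) (ℱ n),
    condExp_smul (μ := μ) (s * l) (fun ω => χ (n + 1) ω ⬝ᵥ ξ) (ℱ n),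
    h.condExp_dotProduct_draw n ξ] with ω hadd hsmul hdraw
  rw [hadd, Pi.add_apply, condExp_of_stronglyMeasurable (ℱ.le n)
    (h.measurable_dotProduct n ξ).stronglyMeasurable hM, hsmul, Pi.smul_apply, hdraw, smul_eq_mul]
  ring

lemma martingale [IsFiniteMeasure μ] (h : IsUrnProcess μ ℱ Q s S χ) (hξ : Q *ᵥ ξ = l • ξ)
    (hsl : 0 ≤ s * l) :
    Martingale (fun n ω => S n ω ⬝ᵥ ξ / growthFactor (s * l) n) ℱ μ :=
  martingale_div_prod_of_condExp_succ
    (fun n => (h.measurable_dotProduct n ξ).stronglyMeasurable)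
    (fun n => (memLp_dotProduct (h.memLp 1 n) ξ).integrable le_rfl) (fun n => by positivity)
    (h.condExp_dotProduct_succ hξ)

lemma integral_dotProduct_one_le [IsProbabilityMeasure μ] (h : IsUrnProcess μ ℱ Q s S χ)
    (hQ : ∀ i, ∑ j, Q i j = 1) (hs : 0 ≤ s) (n : ℕ) :
    ∫ ω, S n ω ⬝ᵥ 1 ∂μ ≤ growthFactor s n := by
  have hQ1 : Q *ᵥ 1 = (1 : ℝ) • 1 := by
    ext i; simp [mulVec, dotProduct_one, hQ]
  have hmean := integral_eq_prod_mul_of_condExp_succ (X := fun n ω => S n ω ⬝ᵥ 1)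
    (h.condExp_dotProduct_succ hQ1) n
  simp only [mul_one] at hmean
  rw [hmean]
  refine mul_le_of_le_one_right (growthFactor.pos hs n).le ?_
  calc ∫ ω, S 0 ω ⬝ᵥ 1 ∂μ ≤ ∫ _ω, (1 : ℝ) ∂μ :=
        integral_mono ((memLp_dotProduct (h.memLp 1 0) 1).integrable le_rfl) (integrable_const _)
          fun ω => by simpa [dotProduct_one] using h.sum_le 0 ω
    _ = 1 := by simp

lemma integral_sq_draw_le [IsProbabilityMeasure μ] (h : IsUrnProcess μ ℱ Q s S χ)
    (hQ : ∀ i, ∑ j, Q i j = 1) (hs : 0 ≤ s) (n : ℕ) (ξ : ι → ℝ) :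
    ∫ ω, (χ (n + 1) ω ⬝ᵥ ξ) ^ 2 ∂μ ≤ (ξ ⬝ᵥ ξ) * (growthFactor s n / (n + 1)) := by
  have hY := memLp_dotProduct (h.memLp_draw 2 n) ξ
  have hχ1 := (memLp_dotProduct (h.memLp_draw 1 n) 1).integrable le_rfl
  have hmass : ∫ ω, χ (n + 1) ω ⬝ᵥ 1 ∂μ = (∫ ω, S n ω ⬝ᵥ 1 ∂μ) / (n + 1) := by
    rw [← integral_condExp (ℱ.le n), integral_congr_ae (h.condExp_dotProduct_draw n 1),
      integral_div]
  calc ∫ ω, (χ (n + 1) ω ⬝ᵥ ξ) ^ 2 ∂μ ≤ ∫ ω, (ξ ⬝ᵥ ξ) * (χ (n + 1) ω ⬝ᵥ 1) ∂μ :=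
        integral_mono hY.integrable_sq (hχ1.const_mul _)
          fun ω => sq_dotProduct_le_of_eq_zero_or_single (h.draw n ω) ξ
    _ = (ξ ⬝ᵥ ξ) * ((∫ ω, S n ω ⬝ᵥ 1 ∂μ) / (n + 1)) := by rw [integral_const_mul, hmass]
    _ ≤ (ξ ⬝ᵥ ξ) * (growthFactor s n / (n + 1)) := by
        gcongr
        · exact dotProduct_self_star_nonneg ξ
        · exact h.integral_dotProduct_one_le hQ hs n

lemma integral_sq_succ [IsFiniteMeasure μ] (h : IsUrnProcess μ ℱ Q s S χ) (hξ : Q *ᵥ ξ = l • ξ)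
    (n : ℕ) :
    ∫ ω, (S (n + 1) ω ⬝ᵥ ξ) ^ 2 ∂μ = (1 + 2 * (s * l) / (n + 1)) * ∫ ω, (S n ω ⬝ᵥ ξ) ^ 2 ∂μ +
      (s * l) ^ 2 * ∫ ω, (χ (n + 1) ω ⬝ᵥ ξ) ^ 2 ∂μ := by
  have hcond : μ[fun ω => χ (n + 1) ω ⬝ᵥ ξ | ℱ n] =ᵐ[μ]
      fun ω => ((n : ℝ) + 1)⁻¹ * (S n ω ⬝ᵥ ξ) := by
    simpa only [div_eq_inv_mul] using h.condExp_dotProduct_draw n ξ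
  simp only [h.dotProduct_succ hξ]
  rw [integral_add_mul_sq_of_condExp_eq (ℱ.le n) (h.measurable_dotProduct n ξ).stronglyMeasurable
    (memLp_dotProduct (h.memLp 2 n) ξ) (memLp_dotProduct (h.memLp_draw 2 n) ξ) hcond]
  ring

lemma integral_sq_div_growthFactor_le [IsProbabilityMeasure μ] (h : IsUrnProcess μ ℱ Q s S χ)
    (hQ : ∀ i, ∑ j, Q i j = 1) (hξ : Q *ᵥ ξ = l • ξ) (hs : 0 < s) (hl : 1 / 2 < l) (n : ℕ) :
    ∫ ω, (S n ω ⬝ᵥ ξ / growthFactor (s * l) n) ^ 2 ∂μ ≤ ∫ ω, (S 0 ω ⬝ᵥ ξ) ^ 2 ∂μ +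
      (s * l) ^ 2 * (ξ ⬝ᵥ ξ) * ((1 + s * l) ^ 2 / (2 * (s * l) - s)) := by
  have hξξ : 0 ≤ ξ ⬝ᵥ ξ := dotProduct_self_star_nonneg ξ
  have hsl : s < 2 * (s * l) := by nlinarith
  simp only [div_pow]
  rw [integral_div]
  refine growthFactor.div_sq_le_of_le_succ (v := fun n => ∫ ω, (S n ω ⬝ᵥ ξ) ^ 2 ∂μ) hs.le hsl
    (by positivity)
    (fun n => integral_nonneg fun ω => sq_nonneg _) (fun n => ?_) n
  rw [h.integral_sq_succ hξ n, mul_assoc]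
  gcongr
  exact h.integral_sq_draw_le hQ hs.le n ξ

end IsUrnProcess

end Urn

theorem stmt_10_general {Ω : Type*} {m0 : MeasurableSpace Ω} (μ : Measure Ω) [IsProbabilityMeasure μ]
    (ℱ : Filtration ℕ m0) (Q : Matrix (Fin 2) (Fin 2) ℝ) (s l : ℝ) (ξ : Fin 2 → ℝ)
    (S χ : ℕ → Ω → Fin 2 → ℝ)
    (hs0 : 0 < s)
    (hQrow : ∀ i, ∑ j, Q i j = 1)
    (hl : 1 / 2 < l) (hξ : Q.mulVec ξ = l • ξ)
    (hSnn : ∀ n ω i, 0 ≤ S n ω i) (hStot : ∀ n ω, S n ω 0 + S n ω 1 ≤ n + 1)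
    (hχ : ∀ n ω, χ (n + 1) ω = Pi.single 0 1 ∨ χ (n + 1) ω = Pi.single 1 1 ∨
      χ (n + 1) ω = 0)
    (hSmeas : ∀ n i, Measurable[ℱ n] (fun ω => S n ω i))
    (hχmeas : ∀ n i, Measurable[ℱ (n + 1)] (fun ω => χ (n + 1) ω i))
    (hevol : ∀ n ω, S (n + 1) ω = S n ω + s • Matrix.vecMul (χ (n + 1) ω) Q)
    (hdraw : ∀ n i, μ[fun ω => χ (n + 1) ω i | ℱ n] =ᵐ[μ] fun ω => S n ω i / (n + 1)) :
    Martingale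
      (fun n ω => (∑ i, S n ω i * ξ i) / ∏ j ∈ Finset.range n, (1 + s * l / (j + 1))) ℱ μ ∧
    ∃ B : ℝ, ∀ n,
      ∫ ω, ((∑ i, S n ω i * ξ i) / ∏ j ∈ Finset.range n, (1 + s * l / (j + 1))) ^ 2 ∂μ ≤ B := by
  have h : IsUrnProcess μ ℱ Q s S χ :=
    { nonneg := hSnn
      sum_le := fun n ω => by simpa [Fin.sum_univ_two] using hStot n ω
      draw := fun n ω => by
        rcases hχ n ω with hc | hc | hc
        exacts [Or.inr ⟨0, hc⟩, Or.inr ⟨1, hc⟩, Or.inl hc]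
      measurable := hSmeas
      measurable_draw := hχmeas
      succ := hevol
      condExp_draw := hdraw }
  exact ⟨h.martingale hξ (by positivity), _, h.integral_sq_div_growthFactor_le hQrow hξ hs0 hl⟩

/-- Three-color urn with replacement matrix `[[sQ, *],[0,0,1]]`, `Q` a 2×2 irreducible
aperiodic stochastic matrix with non-principal eigenvalue `λ > 1/2` and eigenvector
`ξ`, `0 < s < 1`. Then `T_n = S_n ξ / Π_n(sλ)` is an L²-bounded martingale, where
`S_n = (W_n, B_n)` and `Π_n(sλ) = ∏_{j=0}^{n-1}(1 + sλ/(j+1))`. -/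
theorem stmt_10 {Ω : Type*} {m0 : MeasurableSpace Ω} (μ : Measure Ω) [IsProbabilityMeasure μ]
    (ℱ : Filtration ℕ m0) (Q : Matrix (Fin 2) (Fin 2) ℝ) (s l : ℝ) (ξ : Fin 2 → ℝ)
    (S χ : ℕ → Ω → Fin 2 → ℝ)
    (hs0 : 0 < s) (hs1 : s < 1)
    (hQnn : ∀ i j, 0 ≤ Q i j) (hQrow : ∀ i, ∑ j, Q i j = 1)
    (hirr : 0 < Q 0 1 ∧ 0 < Q 1 0) (haper : 0 < Q 0 0 + Q 1 1)
    (hl : 1 / 2 < l) (hl1 : l < 1) (hξ : Q.mulVec ξ = l • ξ) (hξ0 : ξ ≠ 0)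
    (hSnn : ∀ n ω i, 0 ≤ S n ω i) (hStot : ∀ n ω, S n ω 0 + S n ω 1 ≤ n + 1)
    (hχ : ∀ n ω, χ (n + 1) ω = Pi.single 0 1 ∨ χ (n + 1) ω = Pi.single 1 1 ∨
      χ (n + 1) ω = 0)
    (hSmeas : ∀ n i, Measurable[ℱ n] (fun ω => S n ω i))
    (hχmeas : ∀ n i, Measurable[ℱ (n + 1)] (fun ω => χ (n + 1) ω i))
    (hevol : ∀ n ω, S (n + 1) ω = S n ω + s • Matrix.vecMul (χ (n + 1) ω) Q)
    (hdraw : ∀ n i, μ[fun ω => χ (n + 1) ω i | ℱ n] =ᵐ[μ] fun ω => S n ω i / (n + 1)) :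
    Martingale
      (fun n ω => (∑ i, S n ω i * ξ i) / ∏ j ∈ Finset.range n, (1 + s * l / (j + 1))) ℱ μ ∧
    ∃ B : ℝ, ∀ n,
      ∫ ω, ((∑ i, S n ω i * ξ i) / ∏ j ∈ Finset.range n, (1 + s * l / (j + 1))) ^ 2 ∂μ ≤ B :=
  stmt_10_general μ ℱ Q s l ξ S χ hs0 hQrow hl hξ hSnn hStot hχ hSmeas hχmeas hevol hdraw
end

section
/- In the three-color urn model with diagonalizable replacement matrix R given by (3), with eigenvector v₂ of R for eigenvalue λ > 1/2, the process Z_n = C_nv₂ / Π_n(λ) is an L²-bounded martingale, and C_nv₂/n^λ converges almost surely. -/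
open MeasureTheory Filter Finset Topology Matrix
open scoped Nat

/-!
Write `S n = C n ⬝ᵥ v₂` and `X n = χ (n + 1) ⬝ᵥ v₂`. Since `v₂` is a `λ`-eigenvector of `R`,
`S (n + 1) = S n + λ X n`, and the drawing rule gives `E[X n | ℱ n] = S n / (n + 1)`; hence
`E[S (n + 1) | ℱ n] = (1 + λ / (n + 1)) S n` and `Z n = S n / Π_n(λ)` is a martingale. Its increment
`λ (X n - E[X n | ℱ n]) / Π_{n+1}(λ)` is bounded by `2 λ ‖v₂‖ / Π_{n+1}(λ)`. Euler's limit formula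
for `Γ` gives `Π_n(λ) ~ n ^ λ / Γ(1 + λ)`, so for `2 λ > 1` the squared increments are summable.
Orthogonality of martingale increments turns this into a uniform bound on `E[Z n ^ 2]`, the
martingale convergence theorem gives `Z n → Z∞` almost surely, and then
`S n / n ^ λ → Z∞ / Γ(1 + λ)`.
-/

-- `Π_n(λ)` in the paper
noncomputable def urnProd (l : ℝ) (n : ℕ) : ℝ := ∏ j ∈ range n, (1 + l / (j + 1))

section urnProd

variable {l : ℝ}

theorem urnProd_succ (l : ℝ) (n : ℕ) : urnProd l (n + 1) = urnProd l n * (1 + l / (n + 1)) :=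
  prod_range_succ _ _

theorem urnProd_pos (hl : 0 ≤ l) (n : ℕ) : 0 < urnProd l n :=
  prod_pos fun _ _ => by positivity

theorem prod_range_one_add_add_natCast (l : ℝ) (n : ℕ) :
    ∏ j ∈ range n, (1 + l + j) = n ! * urnProd l n := by
  rw [urnProd, ← prod_range_add_one_eq_factorial, Nat.cast_prod, ← prod_mul_distrib]
  refine prod_congr rfl fun j _ => ?_
  push_cast
  field_simp
  ring

theorem tendsto_urnProd_div_rpow (hl : 0 < l) :
    Tendsto (fun n : ℕ => urnProd l n / (n : ℝ) ^ l) atTop (𝓝 (Real.Gamma (1 + l))⁻¹) := by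
  rw [← tendsto_add_atTop_iff_nat 1]
  have hratio : Tendsto (fun n : ℕ => ((n : ℝ) / (n + 1)) ^ (1 + l)) atTop (𝓝 1) := by
    simpa using (tendsto_natCast_div_add_atTop (1 : ℝ)).rpow_const (Or.inl one_ne_zero)
  have hlim := ((Real.GammaSeq_tendsto_Gamma (1 + l)).inv₀
    (Real.Gamma_pos_of_pos (by linarith)).ne').mul hratio
  rw [mul_one] at hlim
  refine hlim.congr' ?_
  filter_upwards [eventually_gt_atTop 0] with n hn
  have hn' : (0 : ℝ) < n := by exact_mod_cast hn
  -- `GammaSeq (1 + l) n = n ^ (1 + l) * n! / ((n + 1)! * Π_{n+1}(l))`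
  rw [Real.GammaSeq, prod_range_one_add_add_natCast, Real.div_rpow hn'.le (by positivity),
    Real.rpow_add hn', Real.rpow_add (by positivity), Real.rpow_one, Real.rpow_one,
    Nat.factorial_succ]
  push_cast
  have hP := urnProd_pos hl.le (n + 1)
  field_simp

theorem summable_inv_urnProd_sq (hl : 1 / 2 < l) : Summable fun n => (urnProd l n)⁻¹ ^ 2 := by
  have hl0 : 0 < l := by linarith
  set q := (Real.Gamma (1 + l))⁻¹
  have hq : 0 < q := inv_pos.2 (Real.Gamma_pos_of_pos (by linarith))
  have hsum : Summable fun n : ℕ => (2 / q) ^ 2 * ((n : ℝ) ^ (2 * l))⁻¹ :=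
    (Real.summable_nat_rpow_inv.2 (by linarith)).mul_left _
  refine hsum.of_norm_bounded_eventually_nat ?_
  filter_upwards [(tendsto_urnProd_div_rpow hl0).eventually (eventually_gt_nhds (half_lt_self hq)),
    eventually_gt_atTop 0] with n hn hn0
  have hn' : (0 : ℝ) < n := by exact_mod_cast hn0
  have hnl : 0 < (n : ℝ) ^ l := by positivity
  rw [lt_div_iff₀ hnl] at hn
  have key : (urnProd l n)⁻¹ ≤ 2 / q * ((n : ℝ) ^ l)⁻¹ := by
    calc (urnProd l n)⁻¹ ≤ (q / 2 * (n : ℝ) ^ l)⁻¹ := inv_anti₀ (by positivity) hn.le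
      _ = 2 / q * ((n : ℝ) ^ l)⁻¹ := by rw [mul_inv, inv_div]
  rw [Real.norm_eq_abs, abs_of_nonneg (by positivity), mul_comm 2 l, Real.rpow_mul hn'.le,
    Real.rpow_two, ← inv_pow, ← mul_pow]
  exact pow_le_pow_left₀ (inv_nonneg.2 (urnProd_pos hl0.le n).le) key 2

end urnProd

namespace MeasureTheory

variable {Ω : Type*} {m0 : MeasurableSpace Ω} {μ : Measure Ω} {ℱ : Filtration ℕ m0}
  {f : ℕ → Ω → ℝ}

theorem Martingale.integral_sq_succ [IsFiniteMeasure μ] (hf : Martingale f ℱ μ)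
    (hL2 : ∀ n, MemLp (f n) 2 μ) (n : ℕ) :
    ∫ ω, f (n + 1) ω ^ 2 ∂μ = ∫ ω, f n ω ^ 2 ∂μ + ∫ ω, (f (n + 1) ω - f n ω) ^ 2 ∂μ := by
  set d := f (n + 1) - f n
  have hd : MemLp d 2 μ := (hL2 _).sub (hL2 n)
  have hfd : Integrable (f n * d) μ := (hL2 n).integrable_mul hd
  have hd0 : μ[d | ℱ n] =ᵐ[μ] 0 := by
    filter_upwards [condExp_sub (hf.integrable (n + 1)) (hf.integrable n) (ℱ n),
      hf.condExp_ae_eq n.le_succ] with ω h h1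
    simp [d, h, h1, condExp_of_stronglyMeasurable (ℱ.le n) (hf.stronglyMeasurable n)
      (hf.integrable n)]
  have horth : ∫ ω, f n ω * d ω ∂μ = 0 := by
    calc ∫ ω, f n ω * d ω ∂μ = ∫ ω, μ[f n * d | ℱ n] ω ∂μ := (integral_condExp (ℱ.le n)).symm
      _ = 0 := by
        refine integral_eq_zero_of_ae ?_
        filter_upwards [condExp_mul_of_stronglyMeasurable_left (hf.stronglyMeasurable n) hfd
          (hd.integrable one_le_two), hd0] with ω h h0
        simp [h, h0]
  have hsq (ω : Ω) : f (n + 1) ω ^ 2 = f n ω ^ 2 + (2 * (f n ω * d ω) + d ω ^ 2) := by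
    simp only [d, Pi.sub_apply]
    ring
  simp_rw [hsq]
  rw [integral_add (hL2 n).integrable_sq (by exact (hfd.const_mul 2).add hd.integrable_sq),
    integral_add (by exact hfd.const_mul 2) hd.integrable_sq, integral_const_mul, horth]
  simp [d]

theorem Martingale.integral_sq_le_of_abs_sub_le [IsProbabilityMeasure μ]
    (hf : Martingale f ℱ μ) (hL2 : ∀ n, MemLp (f n) 2 μ) {c : ℕ → ℝ}
    (hc : ∀ n ω, |f (n + 1) ω - f n ω| ≤ c n) (hsum : Summable fun n => c n ^ 2) (n : ℕ) :
    ∫ ω, f n ω ^ 2 ∂μ ≤ ∫ ω, f 0 ω ^ 2 ∂μ + ∑' j, c j ^ 2 := by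
  have hpartial : ∫ ω, f n ω ^ 2 ∂μ ≤ ∫ ω, f 0 ω ^ 2 ∂μ + ∑ j ∈ range n, c j ^ 2 := by
    induction n with
    | zero => simp
    | succ n ih =>
      have hstep : ∫ ω, (f (n + 1) ω - f n ω) ^ 2 ∂μ ≤ c n ^ 2 := by
        calc ∫ ω, (f (n + 1) ω - f n ω) ^ 2 ∂μ ≤ ∫ _, c n ^ 2 ∂μ :=
              integral_mono ((hL2 _).sub (hL2 n)).integrable_sq (integrable_const _)
                fun ω => sq_le_sq' (abs_le.1 (hc n ω)).1 (abs_le.1 (hc n ω)).2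
          _ = c n ^ 2 := by simp
      rw [hf.integral_sq_succ hL2, sum_range_succ]
      linarith
  exact hpartial.trans (by gcongr; exact hsum.sum_le_tsum _ fun j _ => sq_nonneg (c j))

theorem Martingale.ae_exists_tendsto_of_integral_sq_le [IsFiniteMeasure μ] (hf : Martingale f ℱ μ)
    (hL2 : ∀ n, MemLp (f n) 2 μ) {B : ℝ} (hB : ∀ n, ∫ ω, f n ω ^ 2 ∂μ ≤ B) :
    ∀ᵐ ω ∂μ, ∃ c, Tendsto (fun n => f n ω) atTop (𝓝 c) := by
  refine hf.submartingale.exists_ae_tendsto_of_bdd (R := ((B + μ.real Set.univ) / 2).toNNReal)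
    fun n => ?_
  -- `|x| ≤ (x ^ 2 + 1) / 2` turns the bound on second moments into one on first moments
  have hL1 : ∫ ω, |f n ω| ∂μ ≤ (B + μ.real Set.univ) / 2 := by
    calc ∫ ω, |f n ω| ∂μ ≤ ∫ ω, (f n ω ^ 2 + 1) / 2 ∂μ :=
          integral_mono (hf.integrable n).abs
            (((hL2 n).integrable_sq.add (integrable_const 1)).div_const 2)
            fun ω => by nlinarith [sq_abs (f n ω), sq_nonneg (|f n ω| - 1)]
      _ = (∫ ω, f n ω ^ 2 ∂μ + μ.real Set.univ) / 2 := by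
          rw [integral_div, integral_add (hL2 n).integrable_sq (integrable_const 1)]
          simp
      _ ≤ (B + μ.real Set.univ) / 2 := by linarith [hB n]
  rw [eLpNorm_one_eq_lintegral_enorm, ← ofReal_integral_norm_eq_lintegral_enorm (hf.integrable n)]
  exact ENNReal.ofReal_le_ofReal hL1

end MeasureTheory

theorem condExp_dotProduct_const {Ω ι : Type*} [Fintype ι] {m m0 : MeasurableSpace Ω}
    {μ : Measure Ω} {Y c : Ω → ι → ℝ} (v : ι → ℝ) (hY : ∀ i, Integrable (fun ω => Y ω i) μ)
    (hc : ∀ i, μ[fun ω => Y ω i | m] =ᵐ[μ] fun ω => c ω i) :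
    μ[fun ω => Y ω ⬝ᵥ v | m] =ᵐ[μ] fun ω => c ω ⬝ᵥ v := by
  have hsum : (fun ω => Y ω ⬝ᵥ v) = ∑ i, v i • fun ω => Y ω i := by
    ext ω; simp [dotProduct, mul_comm]
  rw [hsum]
  refine (condExp_finsetSum (fun i _ => (hY i).smul (v i)) m).trans ?_
  filter_upwards [ae_all_iff.2 fun i => (condExp_smul (v i) _ m).trans ((hc i).const_smul (v i))]
    with ω h
  simp [Finset.sum_apply, h, dotProduct, mul_comm]

theorem abs_dotProduct_le_sum_mul_norm {ι : Type*} [Fintype ι] {x : ι → ℝ} (hx : ∀ i, 0 ≤ x i)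
    (v : ι → ℝ) : |x ⬝ᵥ v| ≤ (∑ i, x i) * ‖v‖ := by
  calc |x ⬝ᵥ v| ≤ ∑ i, |x i * v i| := abs_sum_le_sum_abs _ _
    _ ≤ ∑ i, x i * ‖v‖ := sum_le_sum fun i _ => by
        rw [abs_mul, abs_of_nonneg (hx i)]
        exact mul_le_mul_of_nonneg_left (norm_le_pi_norm v i) (hx i)
    _ = (∑ i, x i) * ‖v‖ := (sum_mul _ _ _).symm

section UrnMartingale

variable {Ω : Type*} {m0 : MeasurableSpace Ω} {μ : Measure Ω} {ℱ : Filtration ℕ m0}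
  {S X : ℕ → Ω → ℝ} {l : ℝ}

theorem martingale_div_urnProd [IsFiniteMeasure μ] (hl : 0 ≤ l) (hS : ∀ n, Measurable[ℱ n] (S n))
    (hSint : ∀ n, Integrable (S n) μ) (hXint : ∀ n, Integrable (X n) μ)
    (hrec : ∀ n ω, S (n + 1) ω = S n ω + l * X n ω)
    (hX : ∀ n, μ[X n | ℱ n] =ᵐ[μ] fun ω => S n ω / (n + 1)) :
    Martingale (fun n ω => S n ω / urnProd l n) ℱ μ := by
  refine martingale_nat (fun n => ((hS n).div_const _).stronglyMeasurable)
    (fun n => (hSint n).div_const _) fun n => ?_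
  have hfun : (fun ω => S (n + 1) ω / urnProd l (n + 1)) =
      (urnProd l (n + 1))⁻¹ • (S n + l • X n) := by
    ext ω; simp [hrec, div_eq_inv_mul]
  rw [hfun]
  filter_upwards [condExp_smul (urnProd l (n + 1))⁻¹ (S n + l • X n) (ℱ n),
    condExp_add (hSint n) ((hXint n).smul l) (ℱ n), condExp_smul l (X n) (ℱ n), hX n]
    with ω h1 h2 h3 h4
  have hP := urnProd_pos hl n
  have hfactor : 0 < 1 + l / (n + 1) := by positivity
  rw [h1, Pi.smul_apply, h2, Pi.add_apply, h3, Pi.smul_apply, h4,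
    condExp_of_stronglyMeasurable (ℱ.le n) (hS n).stronglyMeasurable (hSint n), urnProd_succ,
    smul_eq_mul, smul_eq_mul]
  field_simp

theorem abs_div_urnProd_succ_sub_le (hl : 0 ≤ l) {K : ℝ}
    (hrec : ∀ n ω, S (n + 1) ω = S n ω + l * X n ω) (hS_le : ∀ n ω, |S n ω| ≤ (n + 1) * K)
    (hX_le : ∀ n ω, |X n ω| ≤ K) (n : ℕ) (ω : Ω) :
    |S (n + 1) ω / urnProd l (n + 1) - S n ω / urnProd l n| ≤
      2 * l * K * (urnProd l (n + 1))⁻¹ := by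
  have hP := urnProd_pos hl n
  have hn : (0 : ℝ) < n + 1 := by positivity
  have hincr : S (n + 1) ω / urnProd l (n + 1) - S n ω / urnProd l n =
      l * (X n ω - S n ω / (n + 1)) * (urnProd l (n + 1))⁻¹ := by
    have hfactor : 0 < 1 + l / (n + 1) := by positivity
    rw [hrec, urnProd_succ]
    field_simp
    ring
  have hmean : |S n ω / (n + 1)| ≤ K := by
    rw [abs_div, abs_of_pos hn, div_le_iff₀ hn, mul_comm]
    exact hS_le n ω
  have hinv := inv_pos.2 (urnProd_pos hl (n + 1))
  rw [hincr, abs_mul, abs_of_pos hinv]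
  refine mul_le_mul_of_nonneg_right ?_ hinv.le
  rw [abs_mul, abs_of_nonneg hl, mul_comm 2 l, mul_assoc]
  exact mul_le_mul_of_nonneg_left
    (by linarith [abs_sub (X n ω) (S n ω / (n + 1)), hX_le n ω]) hl

theorem div_urnProd_martingale_bdd_and_ae_tendsto [IsProbabilityMeasure μ] (hl : 1 / 2 < l)
    {K : ℝ} (hS : ∀ n, Measurable[ℱ n] (S n)) (hXm : ∀ n, Measurable (X n))
    (hS_le : ∀ n ω, |S n ω| ≤ (n + 1) * K) (hX_le : ∀ n ω, |X n ω| ≤ K)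
    (hrec : ∀ n ω, S (n + 1) ω = S n ω + l * X n ω)
    (hX : ∀ n, μ[X n | ℱ n] =ᵐ[μ] fun ω => S n ω / (n + 1)) :
    Martingale (fun n ω => S n ω / urnProd l n) ℱ μ ∧
      (∃ B, ∀ n, ∫ ω, (S n ω / urnProd l n) ^ 2 ∂μ ≤ B) ∧
      ∀ᵐ ω ∂μ, ∃ L, Tendsto (fun n : ℕ => S n ω / (n : ℝ) ^ l) atTop (𝓝 L) := by
  have hl0 : 0 < l := by linarith
  have hSL (n : ℕ) (p) : MemLp (S n) p μ :=
    .of_bound ((hS n).mono (ℱ.le n) le_rfl).aestronglyMeasurable _ (ae_of_all _ (hS_le n))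
  have hXint (n : ℕ) : Integrable (X n) μ :=
    .of_bound (hXm n).aestronglyMeasurable _ (ae_of_all _ (hX_le n))
  have hZ := martingale_div_urnProd hl0.le hS (fun n => memLp_one_iff_integrable.1 (hSL n 1))
    hXint hrec hX
  have hL2 (n : ℕ) : MemLp (fun ω => S n ω / urnProd l n) 2 μ := by
    simpa only [div_eq_mul_inv] using (hSL n 2).mul_const (urnProd l n)⁻¹
  have hsum : Summable fun n => (2 * l * K * (urnProd l (n + 1))⁻¹) ^ 2 := by
    simp_rw [mul_pow]
    exact ((summable_nat_add_iff 1).2 (summable_inv_urnProd_sq hl)).mul_left _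
  have hB := hZ.integral_sq_le_of_abs_sub_le hL2
    (abs_div_urnProd_succ_sub_le hl0.le hrec hS_le hX_le) hsum
  refine ⟨hZ, ⟨_, hB⟩, ?_⟩
  filter_upwards [hZ.ae_exists_tendsto_of_integral_sq_le hL2 hB] with ω ⟨c, hc⟩
  exact ⟨_, (hc.mul (tendsto_urnProd_div_rpow hl0)).congr fun n =>
    div_mul_div_cancel₀ (urnProd_pos hl0.le n).ne'⟩

end UrnMartingale

theorem stmt_14_general {Ω : Type*} {m0 : MeasurableSpace Ω} (μ : Measure Ω) [IsProbabilityMeasure μ]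
    (ℱ : Filtration ℕ m0) (l : ℝ)
    (v2 : Fin 3 → ℝ) (C χ : ℕ → Ω → Fin 3 → ℝ)
    (hl : 1 / 2 < l)
    (R : Matrix (Fin 3) (Fin 3) ℝ)
    (hv2 : R.mulVec v2 = l • v2)
    (hCnn : ∀ n ω i, 0 ≤ C n ω i) (hCtot : ∀ n ω, ∑ i, C n ω i = n + 1)
    (hχ : ∀ n ω, ∃ i : Fin 3, χ (n + 1) ω = Pi.single i 1)
    (hCmeas : ∀ n i, Measurable[ℱ n] (fun ω => C n ω i))
    (hχmeas : ∀ n i, Measurable[ℱ (n + 1)] (fun ω => χ (n + 1) ω i))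
    (hevol : ∀ n ω, C (n + 1) ω = C n ω + Matrix.vecMul (χ (n + 1) ω) R)
    (hdraw : ∀ n i, μ[fun ω => χ (n + 1) ω i | ℱ n] =ᵐ[μ] fun ω => C n ω i / (n + 1)) :
    Martingale
      (fun n ω => (∑ i, C n ω i * v2 i) / ∏ j ∈ Finset.range n, (1 + l / (j + 1))) ℱ μ ∧
    (∃ B : ℝ, ∀ n,
      ∫ ω, ((∑ i, C n ω i * v2 i) / ∏ j ∈ Finset.range n, (1 + l / (j + 1))) ^ 2 ∂μ ≤ B) ∧
    ∀ᵐ ω ∂μ, ∃ L : ℝ,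
      Tendsto (fun n : ℕ => (∑ i, C n ω i * v2 i) / (n : ℝ) ^ l) atTop (nhds L) := by
  set S : ℕ → Ω → ℝ := fun n ω => C n ω ⬝ᵥ v2
  set X : ℕ → Ω → ℝ := fun n ω => χ (n + 1) ω ⬝ᵥ v2
  have hS_le (n : ℕ) (ω : Ω) : |S n ω| ≤ (n + 1) * ‖v2‖ :=
    hCtot n ω ▸ abs_dotProduct_le_sum_mul_norm (hCnn n ω) v2
  have hX_le (n : ℕ) (ω : Ω) : |X n ω| ≤ ‖v2‖ := by
    obtain ⟨i, hi⟩ := hχ n ω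
    simpa [X, hi, single_dotProduct] using norm_le_pi_norm v2 i
  have hχ_le (n : ℕ) (i : Fin 3) (ω : Ω) : ‖χ (n + 1) ω i‖ ≤ 1 := by
    obtain ⟨j, hj⟩ := hχ n ω
    rw [hj, Pi.single_apply]
    split_ifs <;> simp
  have hSm (n : ℕ) : Measurable[ℱ n] (S n) :=
    Finset.measurable_sum _ fun i _ => (hCmeas n i).mul_const _
  have hXm (n : ℕ) : Measurable (X n) :=
    (Finset.measurable_sum _ fun i _ => (hχmeas n i).mul_const _).mono (ℱ.le _) le_rfl
  have hrec (n : ℕ) (ω : Ω) : S (n + 1) ω = S n ω + l * X n ω := by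
    simp only [S, X, hevol, add_dotProduct, ← dotProduct_mulVec, hv2, dotProduct_smul, smul_eq_mul]
  have hX (n : ℕ) : μ[X n | ℱ n] =ᵐ[μ] fun ω => S n ω / (n + 1) := by
    refine (condExp_dotProduct_const v2 (fun i => .of_bound
      (((hχmeas n i).mono (ℱ.le _) le_rfl).aestronglyMeasurable) 1 (ae_of_all _ (hχ_le n i)))
      (hdraw n)).trans (ae_of_all _ fun ω => ?_)
    simp [S, dotProduct, sum_div, div_mul_eq_mul_div]
  exact div_urnProd_martingale_bdd_and_ae_tendsto hl hSm hXm hS_le hX_le hrec hX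

/-- Three-color urn with diagonalizable replacement matrix `R = [[s,(1-s)p],[0,P]]`,
`P` irreducible stochastic with non-principal eigenvalue `λ ∈ (1/2, 1)`, and `v₂` an
eigenvector of `R` for `λ`. Then `Z_n = C_n v₂ / Π_n(λ)` is an L²-bounded martingale
and `C_n v₂ / n^λ` converges almost surely. -/
theorem stmt_14 {Ω : Type*} {m0 : MeasurableSpace Ω} (μ : Measure Ω) [IsProbabilityMeasure μ]
    (ℱ : Filtration ℕ m0) (s l : ℝ) (p : Fin 2 → ℝ) (P : Matrix (Fin 2) (Fin 2) ℝ)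
    (v2 : Fin 3 → ℝ) (C χ : ℕ → Ω → Fin 3 → ℝ)
    (hs0 : 0 < s) (hs1 : s < 1)
    (hp : ∀ i, 0 ≤ p i) (hpsum : p 0 + p 1 = 1)
    (hPnn : ∀ i j, 0 ≤ P i j) (hProw : ∀ i, ∑ j, P i j = 1)
    (hirr : 0 < P 0 1 ∧ 0 < P 1 0)
    (hl : 1 / 2 < l) (hl1 : l < 1)
    (R : Matrix (Fin 3) (Fin 3) ℝ)
    (hR : R = !![s, (1 - s) * p 0, (1 - s) * p 1;
                 0, P 0 0, P 0 1;
                 0, P 1 0, P 1 1])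
    (hv2 : R.mulVec v2 = l • v2) (hv20 : v2 ≠ 0)
    (hCnn : ∀ n ω i, 0 ≤ C n ω i) (hCtot : ∀ n ω, ∑ i, C n ω i = n + 1)
    (hχ : ∀ n ω, ∃ i : Fin 3, χ (n + 1) ω = Pi.single i 1)
    (hCmeas : ∀ n i, Measurable[ℱ n] (fun ω => C n ω i))
    (hχmeas : ∀ n i, Measurable[ℱ (n + 1)] (fun ω => χ (n + 1) ω i))
    (hevol : ∀ n ω, C (n + 1) ω = C n ω + Matrix.vecMul (χ (n + 1) ω) R)
    (hdraw : ∀ n i, μ[fun ω => χ (n + 1) ω i | ℱ n] =ᵐ[μ] fun ω => C n ω i / (n + 1)) :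
    Martingale
      (fun n ω => (∑ i, C n ω i * v2 i) / ∏ j ∈ Finset.range n, (1 + l / (j + 1))) ℱ μ ∧
    (∃ B : ℝ, ∀ n,
      ∫ ω, ((∑ i, C n ω i * v2 i) / ∏ j ∈ Finset.range n, (1 + l / (j + 1))) ^ 2 ∂μ ≤ B) ∧
    ∀ᵐ ω ∂μ, ∃ L : ℝ,
      Tendsto (fun n : ℕ => (∑ i, C n ω i * v2 i) / (n : ℝ) ^ l) atTop (nhds L) :=
  stmt_14_general μ ℱ l v2 C χ hl R hv2 hCnn hCtot hχ hCmeas hχmeas hevol hdraw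
end
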